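/- arXiv:1312.2770 — 2 statements merged into one kernel-verified Lean document; each statement's English description precedes it below -/
import Mathlib

section
/- Let E be a Banach lattice. Every order interval [-x, x] (for x in the positive cone of E) is an almost limited subset of E if and only if E satisfies the property (d), i.e., for every disjoint weak* null sequence (f_n) in the dual E*, the sequence of absolute values (|f_n|) is weak* null. -/
open Filter Topology Metric Pointwise

/-- The value `|f| x` of the modulus of a continuous linear functional at a positive
element `x`, given by the Riesz–Kantorovich formula `|f| x = sup { f u : |u| ≤ x }`. -/
noncomputable def absFunctional {E : Type*} [NormedAddCommGroup E] [Lattice E] [IsOrderedAddMonoid E] [HasSolidNorm E] [NormedSpace ℝ E]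
    (f : E →L[ℝ] ℝ) (x : E) : ℝ :=
  sSup ((fun u => f u) '' {u : E | |u| ≤ x})

/-- Two functionals `f, g` on a Banach lattice are (lattice) disjoint: `|f| ⊓ |g| = 0`,
expressed via the Riesz–Kantorovich formula for the infimum of the positive functionals
`|f|` and `|g|`. -/
def DualDisjoint {E : Type*} [NormedAddCommGroup E] [Lattice E] [IsOrderedAddMonoid E] [HasSolidNorm E] [NormedSpace ℝ E]
    (f g : E →L[ℝ] ℝ) : Prop :=
  ∀ x : E, 0 ≤ x → ∀ ε : ℝ, 0 < ε →
    ∃ y : E, 0 ≤ y ∧ y ≤ x ∧ absFunctional f y + absFunctional g (x - y) < ε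

/-- A sequence of functionals is disjoint if any two distinct terms are lattice disjoint. -/
def DualDisjointSeq {E : Type*} [NormedAddCommGroup E] [Lattice E] [IsOrderedAddMonoid E] [HasSolidNorm E] [NormedSpace ℝ E]
    (f : ℕ → E →L[ℝ] ℝ) : Prop :=
  ∀ m k, m ≠ k → DualDisjoint (f m) (f k)

/-- A sequence of functionals is weak* null if it converges to `0` pointwise. -/
def WeakStarNull {E : Type*} [NormedAddCommGroup E] [NormedSpace ℝ E]
    (f : ℕ → E →L[ℝ] ℝ) : Prop :=
  ∀ x : E, Tendsto (fun n => f n x) atTop (𝓝 (0 : ℝ))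

/-- The sequence `(|f n|)` of moduli is weak* null (it suffices to test on positive
elements since `|f n|` is additive and every element is a difference of positives). -/
def AbsWeakStarNull {E : Type*} [NormedAddCommGroup E] [Lattice E] [IsOrderedAddMonoid E] [HasSolidNorm E] [NormedSpace ℝ E]
    (f : ℕ → E →L[ℝ] ℝ) : Prop :=
  ∀ x : E, 0 ≤ x → Tendsto (fun n => absFunctional (f n) x) atTop (𝓝 (0 : ℝ))

/-- A functional is positive if it is nonnegative on the positive cone. -/
def PositiveFunctional {E : Type*} [NormedAddCommGroup E] [Lattice E] [IsOrderedAddMonoid E] [HasSolidNorm E] [NormedSpace ℝ E]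
    (f : E →L[ℝ] ℝ) : Prop :=
  ∀ x : E, 0 ≤ x → 0 ≤ f x

/-- A norm bounded set `A` is almost limited if every disjoint weak* null sequence of
functionals converges to `0` uniformly on `A`. -/
def AlmostLimitedSet {E : Type*} [NormedAddCommGroup E] [Lattice E] [IsOrderedAddMonoid E] [HasSolidNorm E] [NormedSpace ℝ E]
    (A : Set E) : Prop :=
  Bornology.IsBounded A ∧
    ∀ f : ℕ → E →L[ℝ] ℝ, DualDisjointSeq f → WeakStarNull f →
      TendstoUniformlyOn (fun n x => f n x) (fun _ => (0 : ℝ)) atTop A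

/-- A norm bounded set `A` in a Banach space is limited if every weak* null sequence of
functionals converges to `0` uniformly on `A`. -/
def LimitedSet {X : Type*} [NormedAddCommGroup X] [NormedSpace ℝ X] (A : Set X) : Prop :=
  Bornology.IsBounded A ∧
    ∀ f : ℕ → X →L[ℝ] ℝ, WeakStarNull f →
      TendstoUniformlyOn (fun n x => f n x) (fun _ => (0 : ℝ)) atTop A

/-- Property (d): for every disjoint weak* null sequence `(f n)`, `(|f n|)` is weak* null. -/
def PropertyD (E : Type*) [NormedAddCommGroup E] [Lattice E] [IsOrderedAddMonoid E] [HasSolidNorm E] [NormedSpace ℝ E] : Prop :=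
  ∀ f : ℕ → E →L[ℝ] ℝ, DualDisjointSeq f → WeakStarNull f → AbsWeakStarNull f

/-- The lattice operations of the dual are weak* sequentially continuous: for every
weak* null sequence `(f n)`, `(|f n|)` is weak* null. -/
def DualLatticeWeakStarSeqCont (E : Type*) [NormedAddCommGroup E] [Lattice E] [IsOrderedAddMonoid E] [HasSolidNorm E]
    [NormedSpace ℝ E] : Prop :=
  ∀ f : ℕ → E →L[ℝ] ℝ, WeakStarNull f → AbsWeakStarNull f

/-- A sequence in a Banach lattice is disjoint if the moduli of distinct terms meet at 0. -/
def LatticeDisjointSeq {E : Type*} [NormedAddCommGroup E] [Lattice E] [IsOrderedAddMonoid E] [HasSolidNorm E] (x : ℕ → E) : Prop :=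
  ∀ m k, m ≠ k → |x m| ⊓ |x k| = 0

/-- A sequence is weakly null if `f (x n) → 0` for every continuous linear functional. -/
def WeaklyNull {E : Type*} [NormedAddCommGroup E] [NormedSpace ℝ E] (x : ℕ → E) : Prop :=
  ∀ f : E →L[ℝ] ℝ, Tendsto (fun n => f (x n)) atTop (𝓝 (0 : ℝ))

/-- A set is solid if `x ∈ A` and `|y| ≤ |x|` imply `y ∈ A`. -/
def IsSolid {E : Type*} [NormedAddCommGroup E] [Lattice E] [IsOrderedAddMonoid E] [HasSolidNorm E] (A : Set E) : Prop :=
  ∀ x ∈ A, ∀ y : E, |y| ≤ |x| → y ∈ A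

/-- The solid hull of a set. -/
def solidHull {E : Type*} [NormedAddCommGroup E] [Lattice E] [IsOrderedAddMonoid E] [HasSolidNorm E] (A : Set E) : Set E :=
  {y | ∃ x ∈ A, |y| ≤ |x|}

/-- A set is almost order bounded if for every `ε > 0` it is contained in
`[-u, u] + ε B_E` for some positive `u`. -/
def AlmostOrderBounded {E : Type*} [NormedAddCommGroup E] [Lattice E] [IsOrderedAddMonoid E] [HasSolidNorm E] (A : Set E) : Prop :=
  ∀ ε : ℝ, 0 < ε → ∃ u : E, 0 ≤ u ∧ A ⊆ Set.Icc (-u) u + Metric.closedBall (0 : E) ε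

/-- σ-Dedekind completeness: every countable nonempty set bounded above has a supremum. -/
def SigmaDedekindComplete (E : Type*) [NormedAddCommGroup E] [Lattice E] [IsOrderedAddMonoid E] [HasSolidNorm E] : Prop :=
  ∀ s : Set E, s.Countable → s.Nonempty → BddAbove s → ∃ b : E, IsLUB s b

/-- A set is relatively weakly compact if its closure in the weak topology is compact. -/
def RelativelyWeaklyCompact {E : Type*} [NormedAddCommGroup E] [NormedSpace ℝ E]
    (A : Set E) : Prop :=
  IsCompact (closure ((toWeakSpace ℝ E) '' A))

/-- The weak Dunford–Pettis* property: every relatively weakly compact set is almost limited. -/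
def WDPStar (E : Type*) [NormedAddCommGroup E] [Lattice E] [IsOrderedAddMonoid E] [HasSolidNorm E] [NormedSpace ℝ E] : Prop :=
  ∀ A : Set E, RelativelyWeaklyCompact A → AlmostLimitedSet A

/-- The bi-sequence property: for each disjoint weakly null sequence in the positive cone
and each weak* null sequence of positive functionals, `f n (x n) → 0`. -/
def BiSequenceProperty (E : Type*) [NormedAddCommGroup E] [Lattice E] [IsOrderedAddMonoid E] [HasSolidNorm E] [NormedSpace ℝ E] : Prop :=
  ∀ x : ℕ → E, (∀ n, 0 ≤ x n) → LatticeDisjointSeq x → WeaklyNull x →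
    ∀ f : ℕ → E →L[ℝ] ℝ, (∀ n, PositiveFunctional (f n)) → WeakStarNull f →
      Tendsto (fun n => f n (x n)) atTop (𝓝 (0 : ℝ))

/-- The dual Schur property: every disjoint weak* null sequence of functionals is norm null. -/
def DualSchur (E : Type*) [NormedAddCommGroup E] [Lattice E] [IsOrderedAddMonoid E] [HasSolidNorm E] [NormedSpace ℝ E] : Prop :=
  ∀ f : ℕ → E →L[ℝ] ℝ, DualDisjointSeq f → WeakStarNull f →
    Tendsto (fun n => ‖f n‖) atTop (𝓝 (0 : ℝ))

/-- The dual positive Schur property: every weak* null sequence of positive functionals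
is norm null. -/
def DualPositiveSchur (E : Type*) [NormedAddCommGroup E] [Lattice E] [IsOrderedAddMonoid E] [HasSolidNorm E] [NormedSpace ℝ E] : Prop :=
  ∀ f : ℕ → E →L[ℝ] ℝ, (∀ n, PositiveFunctional (f n)) → WeakStarNull f →
    Tendsto (fun n => ‖f n‖) atTop (𝓝 (0 : ℝ))

/-- The norm of a Banach lattice is order continuous: every net decreasing to `0`
converges to `0` in norm. -/
def OrderContinuousNorm (E : Type*) [NormedAddCommGroup E] [Lattice E] [IsOrderedAddMonoid E] [HasSolidNorm E] : Prop :=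
  ∀ {ι : Type*} [Preorder ι] [IsDirected ι (· ≤ ·)] [Nonempty ι] (x : ι → E),
    Antitone x → IsGLB (Set.range x) 0 → Tendsto (fun i => ‖x i‖) atTop (𝓝 (0 : ℝ))

/-- The norm of the dual Banach lattice is order continuous: every net of functionals
decreasing to `0` (in the dual order, i.e., pointwise on the positive cone, with greatest
lower bound `0`) converges to `0` in norm. -/
def DualOrderContinuousNorm (E : Type*) [NormedAddCommGroup E] [Lattice E] [IsOrderedAddMonoid E] [HasSolidNorm E]
    [NormedSpace ℝ E] : Prop :=
  ∀ {ι : Type*} [Preorder ι] [IsDirected ι (· ≤ ·)] [Nonempty ι] (f : ι → E →L[ℝ] ℝ),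
    (∀ i j, i ≤ j → ∀ x : E, 0 ≤ x → f j x ≤ f i x) →
    (∀ i, PositiveFunctional (f i)) →
    (∀ g : E →L[ℝ] ℝ, (∀ i, ∀ x : E, 0 ≤ x → g x ≤ f i x) → ∀ x : E, 0 ≤ x → g x ≤ 0) →
    Tendsto (fun i => ‖f i‖) atTop (𝓝 (0 : ℝ))

/-- A norm bounded set `A` is L-weakly compact if every disjoint sequence in its solid
hull is norm null. -/
def LWeaklyCompactSet {E : Type*} [NormedAddCommGroup E] [Lattice E] [IsOrderedAddMonoid E] [HasSolidNorm E] (A : Set E) : Prop :=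
  Bornology.IsBounded A ∧
    ∀ y : ℕ → E, (∀ n, y n ∈ solidHull A) → LatticeDisjointSeq y →
      Tendsto (fun n => ‖y n‖) atTop (𝓝 (0 : ℝ))

/-- An atom of a Banach lattice. -/
def IsLatticeAtom {E : Type*} [NormedAddCommGroup E] [Lattice E] [IsOrderedAddMonoid E] [HasSolidNorm E] (a : E) : Prop :=
  0 < a ∧ ∀ x y : E, 0 ≤ x → x ≤ a → 0 ≤ y → y ≤ a → x ⊓ y = 0 → x = 0 ∨ y = 0

/-- A Banach lattice is discrete (atomic) if the band generated by its atoms is the whole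
lattice; equivalently, the only element disjoint from all atoms is `0`. -/
def DiscreteBanachLattice (E : Type*) [NormedAddCommGroup E] [Lattice E] [IsOrderedAddMonoid E] [HasSolidNorm E] : Prop :=
  ∀ x : E, (∀ a : E, IsLatticeAtom a → |x| ⊓ a = 0) → x = 0

/-- A linear operator between Banach lattices is order bounded if it maps order intervals
into order intervals. -/
def OrderBoundedOperator {E F : Type*} [NormedAddCommGroup E] [Lattice E] [IsOrderedAddMonoid E] [HasSolidNorm E] [NormedSpace ℝ E]
    [NormedAddCommGroup F] [Lattice F] [IsOrderedAddMonoid F] [HasSolidNorm F] [NormedSpace ℝ F] (T : E →ₗ[ℝ] F) : Prop :=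
  ∀ a b : E, ∃ c d : F, T '' Set.Icc a b ⊆ Set.Icc c d

/-! The Riesz–Kantorovich value `|f| x` is exactly the supremum of `|f u|` over `u ∈ [-x, x]`, so
uniform convergence of `(f n)` to `0` on `[-x, x]` is the same as `|f n| x → 0`; quantifying
over disjoint weak* null sequences and positive `x` turns one side into the other. -/

theorem abs_le_iff_mem_Icc {α : Type*} [Lattice α] [AddCommGroup α] [IsOrderedAddMonoid α]
    {u x : α} :
    |u| ≤ x ↔ u ∈ Set.Icc (-x) x := by
  rw [abs_le', Set.mem_Icc, neg_le, and_comm]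

section NormedLattice

variable {E : Type*} [NormedAddCommGroup E] [Lattice E] [IsOrderedAddMonoid E] [HasSolidNorm E]

theorem norm_le_of_abs_le {u x : E} (h : |u| ≤ x) : ‖u‖ ≤ ‖x‖ :=
  HasSolidNorm.solid (by rwa [abs_of_nonneg ((abs_nonneg u).trans h)])

theorem isBounded_Icc_neg (x : E) : Bornology.IsBounded (Set.Icc (-x) x) :=
  (isBounded_closedBall (x := (0 : E)) (r := ‖x‖)).subset fun _ hu =>
    mem_closedBall_zero_iff.2 (norm_le_of_abs_le (abs_le_iff_mem_Icc.2 hu))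

variable [NormedSpace ℝ E]

theorem absFunctional_eq_sSup_image_Icc (f : E →L[ℝ] ℝ) (x : E) :
    absFunctional f x = sSup (f '' Set.Icc (-x) x) := by
  simp only [absFunctional, abs_le_iff_mem_Icc, Set.ofPred_mem_eq]

theorem bddAbove_image_Icc_neg (f : E →L[ℝ] ℝ) (x : E) : BddAbove (f '' Set.Icc (-x) x) := by
  refine ⟨‖f‖ * ‖x‖, ?_⟩
  rintro _ ⟨u, hu, rfl⟩
  calc f u ≤ ‖f u‖ := Real.le_norm_self _
    _ ≤ ‖f‖ * ‖u‖ := f.le_opNorm u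
    _ ≤ ‖f‖ * ‖x‖ := by gcongr; exact norm_le_of_abs_le (abs_le_iff_mem_Icc.2 hu)

theorem apply_le_absFunctional (f : E →L[ℝ] ℝ) {x u : E} (hu : u ∈ Set.Icc (-x) x) :
    f u ≤ absFunctional f x := by
  rw [absFunctional_eq_sSup_image_Icc]
  exact le_csSup (bddAbove_image_Icc_neg f x) (Set.mem_image_of_mem f hu)

theorem abs_apply_le_absFunctional (f : E →L[ℝ] ℝ) {x u : E} (hu : u ∈ Set.Icc (-x) x) :
    |f u| ≤ absFunctional f x := by
  have hnu : -u ∈ Set.Icc (-x) x := by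
    rw [← abs_le_iff_mem_Icc, abs_neg]
    exact abs_le_iff_mem_Icc.2 hu
  refine abs_le'.2 ⟨apply_le_absFunctional f hu, ?_⟩
  simpa only [map_neg] using apply_le_absFunctional f hnu

theorem absFunctional_nonneg (f : E →L[ℝ] ℝ) {x : E} (hx : 0 ≤ x) : 0 ≤ absFunctional f x :=
  (abs_nonneg _).trans <| by
    simpa only [map_zero] using abs_apply_le_absFunctional f (x := x) (u := 0) ⟨by simpa, hx⟩

theorem absFunctional_le (f : E →L[ℝ] ℝ) {x : E} (hx : 0 ≤ x) {c : ℝ}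
    (h : ∀ u ∈ Set.Icc (-x) x, f u ≤ c) : absFunctional f x ≤ c := by
  rw [absFunctional_eq_sSup_image_Icc]
  exact csSup_le ⟨f 0, Set.mem_image_of_mem f ⟨by simpa, hx⟩⟩ (Set.forall_mem_image.2 h)

theorem tendstoUniformlyOn_Icc_neg_iff {ι : Type*} {l : Filter ι} (f : ι → E →L[ℝ] ℝ) {x : E}
    (hx : 0 ≤ x) :
    TendstoUniformlyOn (fun n u => f n u) (fun _ => 0) l (Set.Icc (-x) x) ↔
      Tendsto (fun n => absFunctional (f n) x) l (𝓝 0) := by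
  simp only [Metric.tendstoUniformlyOn_iff, Metric.tendsto_nhds, dist_zero_left, Real.dist_eq,
    sub_zero, Real.norm_eq_abs]
  constructor
  · intro h ε hε
    filter_upwards [h (ε / 2) (half_pos hε)] with n hn
    have hle : absFunctional (f n) x ≤ ε / 2 :=
      absFunctional_le (f n) hx fun u hu => (le_abs_self _).trans (hn u hu).le
    rw [abs_of_nonneg (absFunctional_nonneg (f n) hx)]
    linarith
  · intro h ε hε
    filter_upwards [h ε hε] with n hn u hu
    exact (abs_apply_le_absFunctional (f n) hu).trans_lt ((le_abs_self _).trans_lt hn)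

end NormedLattice

theorem statement0_general {E : Type*} [NormedAddCommGroup E] [Lattice E] [IsOrderedAddMonoid E] [HasSolidNorm E] [NormedSpace ℝ E] :
    (∀ x : E, 0 ≤ x → AlmostLimitedSet (Set.Icc (-x) x)) ↔ PropertyD E := by
  constructor
  · intro h f hdisj hnull x hx
    exact (tendstoUniformlyOn_Icc_neg_iff f hx).1 ((h x hx).2 f hdisj hnull)
  · intro h x hx
    exact ⟨isBounded_Icc_neg x, fun f hdisj hnull =>
      (tendstoUniformlyOn_Icc_neg_iff f hx).2 (h f hdisj hnull x hx)⟩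

/-- Every order interval `[-x, x]` (for `x ≥ 0`) of a Banach lattice `E` is
almost limited if and only if `E` has property (d). -/
theorem statement0 {E : Type*} [NormedAddCommGroup E] [Lattice E] [IsOrderedAddMonoid E] [HasSolidNorm E] [NormedSpace ℝ E]
    [CompleteSpace E] :
    (∀ x : E, 0 ≤ x → AlmostLimitedSet (Set.Icc (-x) x)) ↔ PropertyD E :=
  statement0_general
end

section
/- Let A be a norm bounded subset of a Banach lattice E. If for every ε > 0 there exists an almost limited subset A_ε of E such that A ⊆ A_ε + ε B_E (where B_E is the closed unit ball of E), then A is almost limited. -/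
open Filter Topology Metric Pointwise

/-! A weak* null sequence of functionals on a Banach space is norm bounded, say by `C`
(uniform boundedness). On `A ⊆ A_δ + δ B_E` the functionals then differ from their values on
the almost limited set `A_δ` by at most `C δ`, so uniform convergence on the `A_δ` passes to `A`. -/

theorem WeakStarNull.exists_norm_le {E : Type*} [NormedAddCommGroup E] [NormedSpace ℝ E]
    [CompleteSpace E] {f : ℕ → E →L[ℝ] ℝ} (hf : WeakStarNull f) : ∃ C, ∀ n, ‖f n‖ ≤ C :=
  banach_steinhaus fun x =>
    let ⟨C, hC⟩ := (hf x).norm.bddAbove_range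
    ⟨C, fun n => hC ⟨n, rfl⟩⟩

theorem ContinuousLinearMap.tendstoUniformlyOn_zero_of_subset_add_closedBall
    {𝕜 E F ι : Type*} [NontriviallyNormedField 𝕜] [SeminormedAddCommGroup E]
    [SeminormedAddCommGroup F] [NormedSpace 𝕜 E] [NormedSpace 𝕜 F] {l : Filter ι}
    {f : ι → E →L[𝕜] F} {C : ℝ} (hC : ∀ᶠ i in l, ‖f i‖ ≤ C) {A : Set E}
    (hA : ∀ δ > 0, ∃ B : Set E, TendstoUniformlyOn (fun i x => f i x) (fun _ => 0) l B ∧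
      A ⊆ B + closedBall 0 δ) :
    TendstoUniformlyOn (fun i x => f i x) (fun _ => 0) l A := by
  rw [Metric.tendstoUniformlyOn_iff]
  intro ε hε
  set δ := ε / 2 / (|C| + 1)
  have hCδ : C * δ < ε / 2 := by
    rw [mul_div_assoc', div_lt_iff₀ (by positivity)]
    nlinarith [le_abs_self C, abs_nonneg C]
  obtain ⟨B, hB, hAB⟩ := hA δ (by positivity)
  filter_upwards [Metric.tendstoUniformlyOn_iff.1 hB (ε / 2) (by positivity), hC]
    with i hBi hCi
  rintro _ hx
  obtain ⟨b, hb, y, hy, rfl⟩ := hAB hx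
  rw [mem_closedBall_zero_iff] at hy
  have hfb : ‖f i b‖ < ε / 2 := by simpa using hBi b hb
  have hfy : ‖f i y‖ ≤ C * δ :=
    ((f i).le_of_opNorm_le hCi y).trans (by gcongr; exact (norm_nonneg _).trans hCi)
  calc dist 0 (f i (b + y)) = ‖f i b + f i y‖ := by rw [dist_zero_left, map_add]
    _ ≤ ‖f i b‖ + ‖f i y‖ := norm_add_le _ _
    _ < ε := by linarith

/-- If a norm bounded set `A` in a Banach lattice `E` satisfies
`A ⊆ A_ε + ε B_E` with `A_ε` almost limited, for every `ε > 0`, then `A` is almost limited. -/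
theorem statement2 {E : Type*} [NormedAddCommGroup E] [Lattice E] [IsOrderedAddMonoid E] [HasSolidNorm E] [NormedSpace ℝ E]
    [CompleteSpace E] (A : Set E) (hA : Bornology.IsBounded A)
    (h : ∀ ε : ℝ, 0 < ε → ∃ B : Set E, AlmostLimitedSet B ∧
      A ⊆ B + Metric.closedBall (0 : E) ε) :
    AlmostLimitedSet A := by
  refine ⟨hA, fun f hdisj hnull => ?_⟩
  obtain ⟨C, hC⟩ := hnull.exists_norm_le
  refine ContinuousLinearMap.tendstoUniformlyOn_zero_of_subset_add_closedBall
    (Eventually.of_forall hC) fun δ hδ => ?_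
  obtain ⟨B, hB, hAB⟩ := h δ hδ
  exact ⟨B, hB.2 f hdisj hnull, hAB⟩
end
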